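/- Monotonicity and vanishing limit of the soliton energy: For c > 1 define the soliton energy E(c) := Σ_{n∈ℤ} ( ½ p̃_c(n)² + V(r̃_c(n)) ), where V(r) = e^{−r} − 1 + r. Then the sum defining E(c) converges for every c > 1, the function c ↦ E(c) is strictly increasing on (1,∞) with dE(c)/dc > 0, and lim_{c→1⁺} E(c) = 0. -/

import Mathlib

open Real Filter Set MeasureTheory

namespace TodaPaper

noncomputable section

/-- The squared Euclidean norm on `ℝ × ℝ`. -/
def nsq (w : ℝ × ℝ) : ℝ := w.1 ^ 2 + w.2 ^ 2

/-- Membership in `ℓ²(ℤ; ℝ²)`. -/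
def Meml2 (u : ℤ → ℝ × ℝ) : Prop := Summable fun n : ℤ => nsq (u n)

/-- The `ℓ²(ℤ; ℝ²)` norm. -/
def l2norm (u : ℤ → ℝ × ℝ) : ℝ := Real.sqrt (∑' n : ℤ, nsq (u n))

/-- Membership in the exponentially weighted space `ℓ²_a`. -/
def Meml2w (a : ℝ) (u : ℤ → ℝ × ℝ) : Prop :=
  Summable fun n : ℤ => Real.exp (2 * a * n) * nsq (u n)

/-- The `ℓ²_a` norm. -/
def wnorm (a : ℝ) (u : ℤ → ℝ × ℝ) : ℝ :=
  Real.sqrt (∑' n : ℤ, Real.exp (2 * a * n) * nsq (u n))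

/-- The Toda potential `V(r) = e^{-r} - 1 + r`. -/
def V (r : ℝ) : ℝ := Real.exp (-r) - 1 + r

/-- Derivative of the Toda potential, `V'(r) = 1 - e^{-r}`. -/
def V' (r : ℝ) : ℝ := 1 - Real.exp (-r)

/-- `u = (r, p)` is a solution of the Toda lattice. -/
structure IsTodaSolution (u : ℝ → ℤ → ℝ × ℝ) : Prop where
  mem : ∀ t, Meml2 (u t)
  dr : ∀ t n, HasDerivAt (fun s => (u s n).1) ((u t (n + 1)).2 - (u t n).2) t
  dp : ∀ t n, HasDerivAt (fun s => (u s n).2) (V' (u t n).1 - V' (u t (n - 1)).1) t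

/-- The decay rate `κ(c)`, the (unique, for `c > 1`) positive root of `sinh κ = c κ`. -/
def kappa (c : ℝ) : ℝ := Classical.epsilon fun k : ℝ => 0 < k ∧ Real.sinh k = c * k

/-- The soliton displacement profile `q̃_c`. -/
def qt (c x : ℝ) : ℝ := Real.log (Real.cosh (kappa c * (x - 1)) / Real.cosh (kappa c * x))

/-- The soliton momentum profile `p̃_c = -c q̃_c'`. -/
def ptil (c : ℝ) : ℝ → ℝ := fun x => -c * deriv (qt c) x

/-- The soliton relative-displacement profile `r̃_c(x) = q̃_c(x+1) - q̃_c(x)`. -/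
def rtil (c : ℝ) : ℝ → ℝ := fun x => qt c (x + 1) - qt c x

/-- The soliton profile `ũ_c = (r̃_c, p̃_c)`. -/
def solProfile (c : ℝ) (x : ℝ) : ℝ × ℝ := (rtil c x, ptil c x)

/-- The soliton `u_c(γ)(n) = ũ_c(n - cγ)`. -/
def uc (c γ : ℝ) : ℤ → ℝ × ℝ := fun n => solProfile c ((n : ℝ) - c * γ)

/-- The neutral mode `u̇_c(γ)(n) = -c ũ_c'(n - cγ)`. -/
def ucDot (c γ : ℝ) : ℤ → ℝ × ℝ := fun n => (-c) • deriv (solProfile c) ((n : ℝ) - c * γ)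

/-- The neutral mode `∂_c u_c(γ)(n)`. -/
def ucDc (c γ : ℝ) : ℤ → ℝ × ℝ := fun n => deriv (fun c' => solProfile c' ((n : ℝ) - c' * γ)) c

/-- The `ℓ²` pairing `⟨u, v⟩ = Σ_n (u₁ v₁ + u₂ v₂)`. -/
def pairing (u v : ℤ → ℝ × ℝ) : ℝ := ∑' n : ℤ, ((u n).1 * (v n).1 + (u n).2 * (v n).2)

/-- The operator `J⁻¹ : (r,p) ↦ (Σ_{k=0}^∞ p(·-k), Σ_{k=1}^∞ r(·-k))`. -/
def Jinv (u : ℤ → ℝ × ℝ) : ℤ → ℝ × ℝ := fun n =>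
  (∑' k : ℕ, (u (n - (k : ℤ))).2, ∑' k : ℕ, (u (n - 1 - (k : ℤ))).1)

/-- The soliton energy `E(c) = Σ_n (½ p̃_c(n)² + V(r̃_c(n)))`. -/
def solEnergy (c : ℝ) : ℝ := ∑' n : ℤ, ((ptil c n) ^ 2 / 2 + V (rtil c n))

/-!
With `T(x) = tanh (κ x)` one has `p̃_c(x) = sinh κ (T(x) - T(x-1))` and
`e^{-r̃_c(x)} = 1 + sinh² κ (1 - T(x)²)`, and the addition formula for `tanh` turns the energy
density `½ p̃_c² + V(r̃_c)` into a difference `G(x+1) - G(x)`. The series is nonnegative, so it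
telescopes to `E(c) = sinh 2κ - 2κ`. The map `c ↦ κ(c)` inverts the increasing function
`k ↦ sinh k / k : (0, ∞) → (1, ∞)`, so it is differentiable with positive derivative and tends
to `0` as `c → 1⁺`. Since `k ↦ sinh 2k - 2k` has derivative `2 cosh 2k - 2 > 0` and vanishes
at `0`, the claims about `E` follow.
-/

open Topology

theorem sinh_lt_mul_cosh {k : ℝ} (hk : 0 < k) : sinh k < k * cosh k := by
  have hmono : StrictMonoOn (fun x : ℝ => x * cosh x - sinh x) (Ici 0) := by
    refine strictMonoOn_of_deriv_pos (convex_Ici 0) (by fun_prop) fun x hx => ?_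
    rw [interior_Ici] at hx
    have hd : HasDerivAt (fun x : ℝ => x * cosh x - sinh x) (x * sinh x) x :=
      (((hasDerivAt_id' x).mul (hasDerivAt_cosh x)).sub (hasDerivAt_sinh x)).congr_deriv
        (by ring)
    rw [hd.deriv]
    exact mul_pos hx (sinh_pos_iff.mpr hx)
  simpa using hmono self_mem_Ici hk.le hk

theorem hasDerivAt_sinh_div_self {k : ℝ} (hk : k ≠ 0) :
    HasDerivAt (fun x => sinh x / x) ((k * cosh k - sinh k) / k ^ 2) k :=
  ((hasDerivAt_sinh k).div (hasDerivAt_id' k) hk).congr_deriv (by ring)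

theorem strictMonoOn_sinh_div_self : StrictMonoOn (fun x => sinh x / x) (Ioi 0) := by
  refine strictMonoOn_of_deriv_pos (convex_Ioi 0)
    (fun x hx => (hasDerivAt_sinh_div_self (ne_of_gt hx)).continuousAt.continuousWithinAt)
    fun x hx => ?_
  rw [interior_Ioi] at hx
  rw [(hasDerivAt_sinh_div_self hx.ne').deriv]
  exact div_pos (sub_pos.mpr (sinh_lt_mul_cosh hx)) (pow_pos hx 2)

theorem one_lt_sinh_div_self {k : ℝ} (hk : 0 < k) : 1 < sinh k / k := by
  rw [lt_div_iff₀ hk, one_mul]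
  exact self_lt_sinh_iff.mpr hk

theorem one_sub_tanh (x : ℝ) : 1 - tanh x = exp (-x) / cosh x := by
  rw [tanh_eq_sinh_div_cosh, ← cosh_sub_sinh]
  field_simp [(cosh_pos x).ne']

theorem tendsto_tanh_atTop : Tendsto tanh atTop (𝓝 1) := by
  have h : Tendsto (fun x => exp (-x) / cosh x) atTop (𝓝 0) :=
    squeeze_zero (fun x => by positivity) (fun x => div_le_self (exp_pos _).le (one_le_cosh x))
      tendsto_exp_neg_atTop_nhds_zero
  have h' := (tendsto_const_nhds (x := (1 : ℝ))).sub h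
  rw [sub_zero] at h'
  exact h'.congr fun x => by rw [← one_sub_tanh, sub_sub_cancel]

theorem tendsto_tanh_atBot : Tendsto tanh atBot (𝓝 (-1)) := by
  simpa [Function.comp_def] using (tendsto_tanh_atTop.comp tendsto_neg_atBot_atTop).neg

theorem hasSum_nat_of_telescoping {f g : ℕ → ℝ} {b : ℝ} (hf : ∀ n, 0 ≤ f n)
    (hfg : ∀ n, f n = g (n + 1) - g n) (hg : Tendsto g atTop (𝓝 b)) : HasSum f (b - g 0) := by
  rw [hasSum_iff_tendsto_nat_of_nonneg hf]
  simp_rw [hfg, Finset.sum_range_sub]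
  exact hg.sub_const _

theorem hasSum_int_of_telescoping {f g : ℤ → ℝ} {a b : ℝ} (hf : ∀ n, 0 ≤ f n)
    (hfg : ∀ n, f n = g (n + 1) - g n) (ha : Tendsto g atBot (𝓝 a))
    (hb : Tendsto g atTop (𝓝 b)) : HasSum f (b - a) := by
  have hpos : HasSum (fun n : ℕ => f n) (b - g 0) :=
    hasSum_nat_of_telescoping (g := fun n : ℕ => g n) (fun n => hf n) (fun n => by simp [hfg])
      (hb.comp tendsto_natCast_atTop_atTop)
  have hneg : HasSum (fun n : ℕ => f (-(n + 1))) (-a - -g 0) :=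
    hasSum_nat_of_telescoping (g := fun n : ℕ => -g (-n)) (fun n => hf _)
      (fun n => by rw [hfg]; push_cast; ring_nf)
      ((ha.comp (tendsto_neg_atTop_atBot.comp tendsto_natCast_atTop_atTop)).neg)
  convert hpos.of_nat_of_neg_add_one hneg using 1
  ring

theorem strictMonoOn_of_exists_hasDerivAt_pos {f : ℝ → ℝ} {D : Set ℝ} (hD : Convex ℝ D)
    (hf : ∀ x ∈ D, ∃ f', HasDerivAt f f' x ∧ 0 < f') : StrictMonoOn f D := by
  refine strictMonoOn_of_deriv_pos hD (fun x hx => ?_) (fun x hx => ?_)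
  · obtain ⟨f', hf', -⟩ := hf x hx
    exact hf'.continuousAt.continuousWithinAt
  · obtain ⟨f', hf', hpos⟩ := hf x (interior_subset hx)
    rwa [hf'.deriv]

theorem exists_sinh_eq_mul {c : ℝ} (hc : 1 < c) : ∃ k, 0 < k ∧ sinh k = c * k := by
  -- `sinh k < c k` at `k = arcosh c`, and `sinh k > c k` at `k = 4 c`.
  set k₀ := arcosh c
  have hk₀ : 0 < k₀ := arcosh_pos hc
  have hsmall : sinh k₀ - c * k₀ < 0 := by
    have := sinh_lt_mul_cosh hk₀
    rw [cosh_arcosh hc.le] at this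
    linarith
  have hbig : 0 < sinh (4 * c) - c * (4 * c) := by
    have h₁ := quadratic_le_exp_of_nonneg (x := 4 * c) (by linarith)
    have h₂ : exp (-(4 * c)) ≤ 1 := exp_le_one_iff.mpr (by linarith)
    rw [sinh_eq]
    nlinarith
  obtain ⟨k, hk, hk0⟩ := intermediate_value_uIcc (a := k₀) (b := 4 * c)
    (f := fun k => sinh k - c * k) (by fun_prop) (mem_uIcc.mpr (Or.inl ⟨hsmall.le, hbig.le⟩))
  refine ⟨k, lt_of_lt_of_le (lt_min hk₀ (by linarith)) hk.1, ?_⟩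
  linarith [show sinh k - c * k = 0 from hk0]

theorem kappa_spec {c : ℝ} (hc : 1 < c) : 0 < kappa c ∧ sinh (kappa c) = c * kappa c :=
  Classical.epsilon_spec (exists_sinh_eq_mul hc)

theorem kappa_pos {c : ℝ} (hc : 1 < c) : 0 < kappa c := (kappa_spec hc).1

theorem sinh_kappa_div_kappa {c : ℝ} (hc : 1 < c) : sinh (kappa c) / kappa c = c := by
  rw [(kappa_spec hc).2, mul_div_cancel_right₀ _ (kappa_pos hc).ne']

theorem kappa_sinh_div_self {k : ℝ} (hk : 0 < k) : kappa (sinh k / k) = k :=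
  strictMonoOn_sinh_div_self.injOn (kappa_pos (one_lt_sinh_div_self hk)) hk
    (sinh_kappa_div_kappa (one_lt_sinh_div_self hk))

theorem strictMonoOn_kappa : StrictMonoOn kappa (Ioi 1) := fun a ha b hb hab => by
  rwa [← strictMonoOn_sinh_div_self.lt_iff_lt (kappa_pos ha) (kappa_pos hb),
    sinh_kappa_div_kappa ha, sinh_kappa_div_kappa hb]

theorem image_kappa_Ioi_one : kappa '' Ioi 1 = Ioi 0 := by
  refine Subset.antisymm (image_subset_iff.mpr fun c hc => kappa_pos hc) fun k hk => ?_
  exact ⟨sinh k / k, one_lt_sinh_div_self hk, kappa_sinh_div_self hk⟩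

theorem continuousAt_kappa {c : ℝ} (hc : 1 < c) : ContinuousAt kappa c :=
  continuousAt_of_monotoneOn_of_image_mem_nhds strictMonoOn_kappa.monotoneOn (Ioi_mem_nhds hc)
    (by rw [image_kappa_Ioi_one]; exact Ioi_mem_nhds (kappa_pos hc))

theorem hasDerivAt_kappa {c : ℝ} (hc : 1 < c) :
    HasDerivAt kappa
      ((kappa c * cosh (kappa c) - sinh (kappa c)) / kappa c ^ 2)⁻¹ c := by
  have hk := kappa_pos hc
  refine (hasDerivAt_sinh_div_self hk.ne').of_local_left_inverse (continuousAt_kappa hc)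
    (div_pos (sub_pos.mpr (sinh_lt_mul_cosh hk)) (pow_pos hk 2)).ne' ?_
  filter_upwards [Ioi_mem_nhds hc] with c' hc' using sinh_kappa_div_kappa hc'

theorem tendsto_kappa_nhdsGT_one : Tendsto kappa (𝓝[>] 1) (𝓝 0) := by
  refine tendsto_order.mpr ⟨fun a ha => ?_, fun b hb => ?_⟩
  · filter_upwards [self_mem_nhdsWithin] with c hc using ha.trans (kappa_pos hc)
  · filter_upwards [Ioo_mem_nhdsGT (one_lt_sinh_div_self hb)] with c hc
    rw [← kappa_sinh_div_self hb]
    exact strictMonoOn_kappa hc.1 (one_lt_sinh_div_self hb) hc.2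

theorem exp_qt (c x : ℝ) : exp (qt c x) = cosh (kappa c * (x - 1)) / cosh (kappa c * x) :=
  exp_log (by positivity)

theorem qt_eq_log (c x : ℝ) :
    qt c x = log (cosh (kappa c) - sinh (kappa c) * tanh (kappa c * x)) := by
  rw [qt, mul_sub_one, cosh_sub, tanh_eq_sinh_div_cosh]
  congr 1
  field_simp [(cosh_pos (kappa c * x)).ne']

theorem hasDerivAt_qt (c x : ℝ) :
    HasDerivAt (qt c) (kappa c * (tanh (kappa c * (x - 1)) - tanh (kappa c * x))) x := by
  set k := kappa c
  have hlogcosh : ∀ a : ℝ, HasDerivAt (fun y => log (cosh (k * (y - a))))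
      (k * tanh (k * (x - a))) x := fun a => by
    refine ((((hasDerivAt_id' x).sub_const a).const_mul k).cosh.log
      (cosh_pos _).ne').congr_deriv ?_
    rw [tanh_eq_sinh_div_cosh]
    ring
  have hq : qt c = fun y => log (cosh (k * (y - 1))) - log (cosh (k * (y - 0))) := by
    ext y
    rw [qt, sub_zero, log_div (cosh_pos _).ne' (cosh_pos _).ne']
  rw [hq]
  simpa only [sub_zero, mul_sub] using (hlogcosh 1).fun_sub (hlogcosh 0)

theorem ptil_eq {c : ℝ} (hc : 1 < c) (x : ℝ) :
    ptil c x = sinh (kappa c) * (tanh (kappa c * x) - tanh (kappa c * (x - 1))) := by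
  rw [ptil, (hasDerivAt_qt c x).deriv, (kappa_spec hc).2]
  ring

theorem exp_neg_rtil (c x : ℝ) :
    exp (-rtil c x) = 1 + sinh (kappa c) ^ 2 * (1 - tanh (kappa c * x) ^ 2) := by
  rw [rtil, neg_sub, exp_sub, exp_qt, exp_qt, add_sub_cancel_right]
  generalize kappa c = k
  rw [mul_sub_one, mul_add_one, cosh_add, cosh_sub, tanh_eq_sinh_div_cosh]
  have := (cosh_pos (k * x)).ne'
  field_simp
  linear_combination cosh (k * x) ^ 2 * cosh_sq k

theorem sinh_mul_one_sub_tanh_mul_tanh (a b : ℝ) :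
    sinh b * (1 - tanh a * tanh (a - b)) = cosh b * (tanh a - tanh (a - b)) := by
  rw [tanh_eq_sinh_div_cosh, tanh_eq_sinh_div_cosh, sinh_sub]
  have := (cosh_pos a).ne'
  have := (cosh_pos (a - b)).ne'
  field_simp
  linear_combination (sinh b * cosh a - cosh b * sinh a) * cosh_sub a b

theorem V_nonneg (r : ℝ) : 0 ≤ V r := by
  linarith [add_one_le_exp (-r), show V r = exp (-r) - 1 + r from rfl]

theorem tendsto_tanh_mul_sub_atTop {k : ℝ} (hk : 0 < k) (a : ℝ) :
    Tendsto (fun x => tanh (k * (x - a))) atTop (𝓝 1) := by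
  have h : Tendsto (fun x => k * (x - a)) atTop atTop := by
    simpa only [id, sub_eq_add_neg] using
      (tendsto_atTop_add_const_right atTop (-a) tendsto_id).const_mul_atTop hk
  exact tendsto_tanh_atTop.comp h

theorem tendsto_tanh_mul_sub_atBot {k : ℝ} (hk : 0 < k) (a : ℝ) :
    Tendsto (fun x => tanh (k * (x - a))) atBot (𝓝 (-1)) := by
  have h : Tendsto (fun x => k * (x - a)) atBot atBot := by
    simpa only [id, sub_eq_add_neg] using
      (tendsto_atBot_add_const_right atBot (-a) tendsto_id).const_mul_atBot hk
  exact tendsto_tanh_atBot.comp h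

/-- A lattice primitive of the energy density (`energy_density_eq_sub`): the `tanh` terms absorb
`½ p̃² + e^{-r̃} - 1` and `q̃` absorbs `r̃`. -/
def energyPotential (c x : ℝ) : ℝ :=
  sinh (kappa c) * cosh (kappa c) * tanh (kappa c * (x - 1))
    - sinh (kappa c) ^ 2 * tanh (kappa c * (x - 1)) ^ 2 / 2 + qt c x

theorem energy_density_eq_sub {c : ℝ} (hc : 1 < c) (x : ℝ) :
    ptil c x ^ 2 / 2 + V (rtil c x) = energyPotential c (x + 1) - energyPotential c x := by
  have key := sinh_mul_one_sub_tanh_mul_tanh (kappa c * x) (kappa c)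
  rw [← mul_sub_one] at key
  rw [V, exp_neg_rtil, ptil_eq hc, rtil, energyPotential, energyPotential, add_sub_cancel_right]
  linear_combination sinh (kappa c) * key

theorem tendsto_energyPotential {c σ : ℝ} {l : Filter ℝ}
    (h : ∀ a, Tendsto (fun x => tanh (kappa c * (x - a))) l (𝓝 σ))
    (hσ : cosh (kappa c) - sinh (kappa c) * σ ≠ 0) :
    Tendsto (energyPotential c) l (𝓝 (sinh (kappa c) * cosh (kappa c) * σ
      - sinh (kappa c) ^ 2 * σ ^ 2 / 2 + log (cosh (kappa c) - sinh (kappa c) * σ))) := by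
  have h₀ : Tendsto (fun x => tanh (kappa c * x)) l (𝓝 σ) := by simpa using h 0
  have hq : Tendsto (qt c) l (𝓝 (log (cosh (kappa c) - sinh (kappa c) * σ))) := by
    simp_rw [funext (qt_eq_log c)]
    exact (tendsto_const_nhds.sub (h₀.const_mul _)).log hσ
  exact (((h 1).const_mul _).sub (((h 1).pow 2).const_mul _ |>.div_const 2)).add hq

theorem hasSum_energy_density {c : ℝ} (hc : 1 < c) :
    HasSum (fun n : ℤ => ptil c n ^ 2 / 2 + V (rtil c n))
      (sinh (2 * kappa c) - 2 * kappa c) := by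
  have hk := kappa_pos hc
  have htop := tendsto_energyPotential (σ := 1) (tendsto_tanh_mul_sub_atTop hk)
    (by rw [mul_one, cosh_sub_sinh]; positivity)
  have hbot := tendsto_energyPotential (σ := -1) (tendsto_tanh_mul_sub_atBot hk)
    (by rw [mul_neg_one, sub_neg_eq_add, cosh_add_sinh]; positivity)
  simp only [mul_one, one_pow, cosh_sub_sinh, log_exp] at htop
  simp only [mul_neg_one, neg_one_sq, sub_neg_eq_add, cosh_add_sinh, log_exp] at hbot
  convert hasSum_int_of_telescoping (f := fun n : ℤ => ptil c n ^ 2 / 2 + V (rtil c n))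
    (g := fun n : ℤ => energyPotential c n)
    (fun n => add_nonneg (by positivity) (V_nonneg _))
    (fun n => by rw [energy_density_eq_sub hc, Int.cast_add, Int.cast_one])
    (hbot.comp (tendsto_intCast_atBot_iff.mpr tendsto_id))
    (htop.comp tendsto_intCast_atTop_atTop) using 1
  rw [sinh_two_mul]
  ring

def energyOfKappa (k : ℝ) : ℝ := sinh (2 * k) - 2 * k

theorem solEnergy_eq {c : ℝ} (hc : 1 < c) : solEnergy c = energyOfKappa (kappa c) :=
  (hasSum_energy_density hc).tsum_eq

theorem hasDerivAt_energyOfKappa (k : ℝ) :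
    HasDerivAt energyOfKappa (2 * cosh (2 * k) - 2) k :=
  ((((hasDerivAt_id' k).const_mul 2).sinh).sub ((hasDerivAt_id' k).const_mul 2)).congr_deriv
    (by ring)

theorem exists_hasDerivAt_solEnergy_pos {c : ℝ} (hc : 1 < c) :
    ∃ E', HasDerivAt solEnergy E' c ∧ 0 < E' := by
  have hk := kappa_pos hc
  refine ⟨_, ((hasDerivAt_energyOfKappa _).comp c (hasDerivAt_kappa hc)).congr_of_eventuallyEq
    ?_, mul_pos ?_ ?_⟩
  · filter_upwards [Ioi_mem_nhds hc] with c' hc' using solEnergy_eq hc'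
  · linarith [one_lt_cosh.mpr (by positivity : 2 * kappa c ≠ 0)]
  · exact inv_pos.mpr (div_pos (sub_pos.mpr (sinh_lt_mul_cosh hk)) (pow_pos hk 2))

theorem tendsto_solEnergy_nhdsGT_one : Tendsto solEnergy (𝓝[>] 1) (𝓝 0) := by
  have h : Tendsto (energyOfKappa ∘ kappa) (𝓝[>] 1) (𝓝 (energyOfKappa 0)) :=
    (hasDerivAt_energyOfKappa 0).continuousAt.tendsto.comp tendsto_kappa_nhdsGT_one
  rw [energyOfKappa, mul_zero, sinh_zero, sub_zero] at h
  refine h.congr' ?_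
  filter_upwards [self_mem_nhdsWithin] with c hc using (solEnergy_eq hc).symm

/-- Monotonicity and vanishing limit of the soliton energy. -/
theorem soliton_energy_monotone :
    (∀ c : ℝ, 1 < c → Summable fun n : ℤ => ((ptil c n) ^ 2 / 2 + V (rtil c n))) ∧
    StrictMonoOn solEnergy (Set.Ioi (1:ℝ)) ∧
    (∀ c : ℝ, 1 < c → ∃ E' : ℝ, HasDerivAt solEnergy E' c ∧ 0 < E') ∧
    Tendsto solEnergy (nhdsWithin 1 (Set.Ioi (1:ℝ))) (nhds 0) :=
  ⟨fun _ hc => (hasSum_energy_density hc).summable,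
    strictMonoOn_of_exists_hasDerivAt_pos (convex_Ioi 1)
      fun _ hc => exists_hasDerivAt_solEnergy_pos hc,
    fun _ hc => exists_hasDerivAt_solEnergy_pos hc,
    tendsto_solEnergy_nhdsGT_one⟩

end

end TodaPaper
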